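/- Let R = ℂ[x₁,x₂,x₃,u₀,u₁,u₂] and let I_B ⊂ R be the ideal generated by x₁u₁−x₂u₀, x₁u₂−x₂u₁, x₁²−x₃u₀, x₁x₂−x₃u₁, x₂²−x₃u₂ and u₀u₂−u₁². Then B = R/I_B is a normal integral domain, i.e. B is a domain that is integrally closed in its field of fractions. -/

import Mathlib

open MvPolynomial

/-- The ideal `I_B = (x₁u₁−x₂u₀, x₁u₂−x₂u₁, x₁²−x₃u₀, x₁x₂−x₃u₁, x₂²−x₃u₂, u₀u₂−u₁²)`
of `R = ℂ[x₁,x₂,x₃,u₀,u₁,u₂]`. Variables: `x₁ = X 0`, `x₂ = X 1`, `x₃ = X 2`,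
`u₀ = X 3`, `u₁ = X 4`, `u₂ = X 5`. -/
noncomputable def IB : Ideal (MvPolynomial (Fin 6) ℂ) :=
  Ideal.span {X 0 * X 4 - X 1 * X 3, X 0 * X 5 - X 1 * X 4,
    X 0 ^ 2 - X 2 * X 3, X 0 * X 1 - X 2 * X 4, X 1 ^ 2 - X 2 * X 5,
    X 3 * X 5 - X 4 ^ 2}

/-!
Sending `x₁, x₂, x₃, u₀, u₁, u₂` to `ac, bc, c², a², ab, b²` identifies `B` with the second
Veronese subring of `ℂ[a, b, c]`.

Injectivity: with weights `(10, 6, 0, 0, 3, 5)` on `(x₁, x₂, x₃, u₀, u₁, u₂)`, each generator of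
`I_B` rewrites one of `x₁², x₁x₂, x₂², x₁u₁, x₁u₂, u₁²` into a monomial of smaller weight, so the
monomials divisible by none of these span `B`; they are sent to pairwise distinct monomials of
`ℂ[a, b, c]`, hence to linearly independent elements.

Normality: the Veronese subring is the ring of invariants of `a, b, c ↦ -a, -b, -c` (an invariant
polynomial only has monomials of even degree), and a subring `A` of an integrally closed domain `S`
that is the ring of invariants of an endomorphism of `S` is integrally closed, since `A` is then
the intersection of `S` with the fraction field of `A`.
-/

open Finsupp

theorem Finsupp.exists_eq_single_add_of_degree_ne_zero {σ : Type*} {e : σ →₀ ℕ}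
    (he : e.degree ≠ 0) : ∃ i e', e = single i 1 + e' ∧ e'.degree + 1 = e.degree := by
  obtain ⟨i, hi⟩ : e.support.Nonempty := Finset.nonempty_iff_ne_empty.mpr fun h =>
    he ((degree_eq_zero_iff e).mpr (Finsupp.support_eq_empty.mp h))
  obtain ⟨e', rfl⟩ := le_iff_exists_add.mp
    (single_le_iff.mpr (Nat.one_le_iff_ne_zero.mpr (Finsupp.mem_support_iff.mp hi)))
  exact ⟨i, e', rfl, by simp [add_comm]⟩

namespace MvPolynomial

variable {σ R : Type*} [CommRing R]

theorem mk_monomial_mem_span_of_reduction {I : Ideal (MvPolynomial σ R)} (w : σ → ℕ)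
    (S : Set (σ →₀ ℕ))
    (hred : ∀ e ∉ S, ∃ a b, a ≤ e ∧ weight w b < weight w a ∧
      monomial a (1 : R) - monomial b 1 ∈ I)
    (e : σ →₀ ℕ) :
    Ideal.Quotient.mk I (monomial e (1 : R)) ∈
      Submodule.span R (Set.range fun e : S => Ideal.Quotient.mk I (monomial (e : σ →₀ ℕ) 1)) := by
  induction h : weight w e using Nat.strong_induction_on generalizing e with | _ n ih =>
  by_cases he : e ∈ S
  · exact Submodule.subset_span ⟨⟨e, he⟩, rfl⟩
  obtain ⟨a, b, hae, hw, hab⟩ := hred e he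
  have hreduce : Ideal.Quotient.mk I (monomial e 1) =
      Ideal.Quotient.mk I (monomial (e - a + b) 1) := by
    rw [Ideal.Quotient.eq]
    convert I.mul_mem_right (monomial (e - a) 1) hab using 1
    rw [sub_mul, monomial_mul, monomial_mul, one_mul, add_tsub_cancel_of_le hae, add_comm b]
  have hweight := congrArg (weight w) (tsub_add_cancel_of_le hae)
  rw [map_add] at hweight
  exact hreduce ▸ ih _ (by rw [map_add]; omega) _ rfl

theorem span_mk_monomial_eq_top_of_reduction {I : Ideal (MvPolynomial σ R)} (w : σ → ℕ)
    (S : Set (σ →₀ ℕ))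
    (hred : ∀ e ∉ S, ∃ a b, a ≤ e ∧ weight w b < weight w a ∧
      monomial a (1 : R) - monomial b 1 ∈ I) :
    Submodule.span R (Set.range fun e : S => Ideal.Quotient.mk I (monomial (e : σ →₀ ℕ) (1 : R))) =
      ⊤ := by
  refine eq_top_iff.mpr fun x _ => ?_
  obtain ⟨p, rfl⟩ := Ideal.Quotient.mk_surjective x
  induction p using MvPolynomial.induction_on' with
  | monomial e c =>
    rw [← mul_one c, ← smul_eq_mul, ← smul_monomial, ← Ideal.Quotient.mkₐ_eq_mk R, map_smul]
    exact Submodule.smul_mem _ c (mk_monomial_mem_span_of_reduction w S hred e)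
  | add p q hp hq => rw [map_add]; exact add_mem (hp trivial) (hq trivial)

theorem aeval_monomial_monomial {τ : Type*} (d : σ → τ →₀ ℕ) (e : σ →₀ ℕ) :
    aeval (fun i => monomial (d i) (1 : R)) (monomial e (1 : R)) =
      monomial (e.sum fun i n => n • d i) 1 := by
  rw [aeval_monomial, monomial_finsupp_sum_index]
  simp [monomial_pow]

theorem aeval_neg_X_monomial (e : σ →₀ ℕ) (c : R) :
    aeval (fun i => -X i) (monomial e c) = (-1) ^ e.degree * monomial e c := by
  have hsign : (e.prod fun _ k => (-1 : MvPolynomial σ R) ^ k) = (-1) ^ e.degree :=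
    Finset.prod_pow_eq_pow_sum _ _ _
  rw [aeval_monomial, monomial_eq, algebraMap_eq]
  simp only [neg_pow (X _ : MvPolynomial σ R), Finsupp.prod_mul, hsign]
  ring

theorem coeff_aeval_neg_X (e : σ →₀ ℕ) (p : MvPolynomial σ R) :
    coeff e (aeval (fun i => -X i) p) = (-1) ^ e.degree * coeff e p := by
  classical
  induction p using MvPolynomial.induction_on' with
  | monomial f c =>
    rw [aeval_neg_X_monomial, ← C_1, ← C_neg, ← C_pow, coeff_C_mul, coeff_monomial]
    split_ifs with h <;> simp [h]
  | add p q hp hq => simp only [map_add, coeff_add, hp, hq, mul_add]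

theorem monomial_mem_of_degree_eq_two_mul (A : Subalgebra R (MvPolynomial σ R))
    (hA : ∀ i j, X i * X j ∈ A) : ∀ n (e : σ →₀ ℕ), e.degree = 2 * n → monomial e (1 : R) ∈ A
  | 0, e, he => by
    rw [(degree_eq_zero_iff e).mp he]
    exact A.one_mem
  | n + 1, e, he => by
    obtain ⟨i, e', rfl, hi⟩ := exists_eq_single_add_of_degree_ne_zero (e := e) (by omega)
    obtain ⟨j, e'', rfl, hj⟩ := exists_eq_single_add_of_degree_ne_zero (e := e') (by omega)
    have hsplit : monomial (single i 1 + (single j 1 + e'')) (1 : R) =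
        X i * X j * monomial e'' 1 := by
      simp only [X, monomial_mul, one_mul, add_assoc]
    rw [hsplit]
    exact A.mul_mem (hA i j) (monomial_mem_of_degree_eq_two_mul A hA n e'' (by omega))

theorem mem_of_aeval_neg_X_eq_self [NoZeroDivisors R] (hR : (-1 : R) ≠ 1)
    (A : Subalgebra R (MvPolynomial σ R)) (hA : ∀ i j, X i * X j ∈ A) {p : MvPolynomial σ R}
    (hp : aeval (fun i => -X i) p = p) : p ∈ A := by
  rw [p.as_sum]
  refine A.sum_mem fun e he => ?_
  have hsign : (-1 : R) ^ e.degree = 1 := by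
    have h := coeff_aeval_neg_X e p
    rw [hp] at h
    exact mul_right_cancel₀ (MvPolynomial.mem_support_iff.mp he) (by rw [one_mul]; exact h.symm)
  obtain ⟨n, hn⟩ := (neg_one_pow_eq_one_iff_even hR).mp hsign
  rw [← mul_one (coeff e p), ← smul_eq_mul, ← smul_monomial]
  exact A.smul_mem (monomial_mem_of_degree_eq_two_mul A hA n e (by omega)) _

end MvPolynomial

theorem IsIntegrallyClosed.of_injective_of_saturated {A S : Type*} [CommRing A] [CommRing S]
    [IsDomain S] [IsIntegrallyClosed S] (f : A →+* S) (hf : Function.Injective f)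
    (hsat : ∀ s a b, f b ≠ 0 → s * f b = f a → s ∈ f.range) : IsIntegrallyClosed A := by
  have := hf.isDomain f
  let K := FractionRing A
  let L := FractionRing S
  have hg : Function.Injective ((algebraMap S L).comp f) :=
    (IsFractionRing.injective S L).comp hf
  let lf : K →+* L := IsFractionRing.lift hg
  have hlf (a : A) : lf (algebraMap A K a) = algebraMap S L (f a) :=
    IsFractionRing.lift_algebraMap hg a
  rw [isIntegrallyClosed_iff K]
  intro x hx
  obtain ⟨s, hs⟩ := IsIntegrallyClosed.isIntegral_iff.mp
    (hx.map_of_comp_eq f lf (RingHom.ext fun a => (hlf a).symm))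
  obtain ⟨⟨a, b⟩, rfl⟩ := IsLocalization.mk'_surjective (nonZeroDivisors A) x
  have hb : f b ≠ 0 := (map_ne_zero_iff f hf).mpr (nonZeroDivisors.ne_zero b.2)
  have hsb : s * f b = f a := IsFractionRing.injective S L (by
    rw [map_mul, hs, ← hlf, ← hlf, ← map_mul, IsLocalization.mk'_spec])
  obtain ⟨r, rfl⟩ := hsat s a b hb hsb
  exact ⟨r, lf.injective (by rw [hlf, hs])⟩

theorem IsIntegrallyClosed.of_injective_of_fixed_mem_range {A S : Type*} [CommRing A]
    [CommRing S] [IsDomain S] [IsIntegrallyClosed S] (f : A →+* S) (hf : Function.Injective f)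
    (σ : S →+* S) (hσf : ∀ a, σ (f a) = f a) (hfixed : ∀ s, σ s = s → s ∈ f.range) :
    IsIntegrallyClosed A :=
  of_injective_of_saturated f hf fun s a b hb hsb => hfixed s <| mul_right_cancel₀ hb <|
    calc σ s * f b = σ (s * f b) := by rw [map_mul, hσf]
      _ = s * f b := by rw [hsb, hσf]

/-- `x₁, x₂, x₃, u₀, u₁, u₂ ↦ ac, bc, c², a², ab, b²`, with `a, b, c = X 0, X 1, X 2`. -/
def veronesePair : Fin 6 → Fin 3 × Fin 3 := ![(0, 2), (1, 2), (2, 2), (0, 0), (0, 1), (1, 1)]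

noncomputable def veroneseExponent (k : Fin 6) : Fin 3 →₀ ℕ :=
  single (veronesePair k).1 1 + single (veronesePair k).2 1

noncomputable def veronese : MvPolynomial (Fin 6) ℂ →ₐ[ℂ] MvPolynomial (Fin 3) ℂ :=
  aeval fun k => monomial (veroneseExponent k) 1

lemma veronese_X (k : Fin 6) :
    veronese (X k) = X (veronesePair k).1 * X (veronesePair k).2 := by
  rw [veronese, aeval_X, veroneseExponent, X, X, monomial_mul, one_mul]

lemma IB_le_ker_veronese : IB ≤ RingHom.ker veronese := by
  rw [IB, Ideal.span_le]
  rintro p (rfl | rfl | rfl | rfl | rfl | rfl) <;>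
    simp [veronese_X, veronesePair] <;> ring

noncomputable def veroneseQuot : (MvPolynomial (Fin 6) ℂ ⧸ IB) →ₐ[ℂ] MvPolynomial (Fin 3) ℂ :=
  Ideal.Quotient.liftₐ IB veronese fun _ h => IB_le_ker_veronese h

lemma veroneseQuot_mk (r : MvPolynomial (Fin 6) ℂ) :
    veroneseQuot (Ideal.Quotient.mk IB r) = veronese r :=
  rfl

/-- The exponents of the monomials divisible by none of `x₁², x₁x₂, x₂², x₁u₁, x₁u₂, u₁²`. -/
def IsStandardExponent (e : Fin 6 →₀ ℕ) : Prop :=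
  e 0 ≤ 1 ∧ e 1 ≤ 1 ∧ e 4 ≤ 1 ∧ (e 0 = 1 → e 1 = 0 ∧ e 4 = 0 ∧ e 5 = 0)

def reductionWeight : Fin 6 → ℕ := ![10, 6, 0, 0, 3, 5]

lemma exists_reduction_of_X_mul_X_sub_mem {e : Fin 6 →₀ ℕ} {i j k l : Fin 6}
    (hrel : X i * X j - X k * X l ∈ IB)
    (hw : reductionWeight k + reductionWeight l < reductionWeight i + reductionWeight j)
    (hle : single i 1 + single j 1 ≤ e) :
    ∃ a b, a ≤ e ∧ weight reductionWeight b < weight reductionWeight a ∧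
      monomial a (1 : ℂ) - monomial b 1 ∈ IB :=
  ⟨_, single k 1 + single l 1, hle, by simpa [weight_single] using hw,
    by simpa [X, monomial_mul] using hrel⟩

lemma exists_reduction (e : Fin 6 →₀ ℕ) (he : ¬IsStandardExponent e) :
    ∃ a b, a ≤ e ∧ weight reductionWeight b < weight reductionWeight a ∧
      monomial a (1 : ℂ) - monomial b 1 ∈ IB := by
  have hcases : 2 ≤ e 0 ∨ 1 ≤ e 0 ∧ 1 ≤ e 1 ∨ 2 ≤ e 1 ∨ 1 ≤ e 0 ∧ 1 ≤ e 4 ∨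
      1 ≤ e 0 ∧ 1 ≤ e 5 ∨ 2 ≤ e 4 := by
    simp only [IsStandardExponent] at he
    omega
  -- x₁² → x₃u₀, x₁x₂ → x₃u₁, x₂² → x₃u₂, x₁u₁ → x₂u₀, x₁u₂ → x₂u₁, u₁² → u₀u₂
  rcases hcases with h | h | h | h | h | h <;> [
    refine exists_reduction_of_X_mul_X_sub_mem (i := 0) (j := 0) (k := 2) (l := 3) ?_ ?_ ?_;
    refine exists_reduction_of_X_mul_X_sub_mem (i := 0) (j := 1) (k := 2) (l := 4) ?_ ?_ ?_;
    refine exists_reduction_of_X_mul_X_sub_mem (i := 1) (j := 1) (k := 2) (l := 5) ?_ ?_ ?_;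
    refine exists_reduction_of_X_mul_X_sub_mem (i := 0) (j := 4) (k := 1) (l := 3) ?_ ?_ ?_;
    refine exists_reduction_of_X_mul_X_sub_mem (i := 0) (j := 5) (k := 1) (l := 4) ?_ ?_ ?_;
    refine exists_reduction_of_X_mul_X_sub_mem (i := 4) (j := 4) (k := 3) (l := 5) ?_ ?_ ?_]
  all_goals first
    | decide
    | intro t; fin_cases t <;> simp <;> omega
    | apply Ideal.subset_span; simp [pow_two]; done
    | rw [sub_mem_comm_iff]; apply Ideal.subset_span; simp [pow_two]

lemma injOn_sum_veroneseExponent :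
    Set.InjOn (fun e : Fin 6 →₀ ℕ => e.sum fun k n => n • veroneseExponent k)
      {e | IsStandardExponent e} := by
  intro e he e' he' h
  have h0 := DFunLike.congr_fun h 0
  have h1 := DFunLike.congr_fun h 1
  have h2 := DFunLike.congr_fun h 2
  simp [Finsupp.sum_fintype, Fin.sum_univ_six, veroneseExponent, veronesePair] at h0 h1 h2
  simp only [Set.mem_ofPred_eq, IsStandardExponent] at he he'
  ext k
  fin_cases k <;> simp <;> omega

lemma veroneseQuot_injective : Function.Injective veroneseQuot := by
  refine LinearMap.injective_of_linearIndependent (f := veroneseQuot.toLinearMap)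
    (span_mk_monomial_eq_top_of_reduction reductionWeight {e | IsStandardExponent e}
      exists_reduction) ?_
  have hcomp : veroneseQuot.toLinearMap ∘ (fun e : {e | IsStandardExponent e} =>
        Ideal.Quotient.mk IB (monomial (e : Fin 6 →₀ ℕ) (1 : ℂ))) =
      basisMonomials (Fin 3) ℂ ∘ {e | IsStandardExponent e}.domRestrict
        (fun e : Fin 6 →₀ ℕ => e.sum fun k n => n • veroneseExponent k) := by
    funext e
    simp only [Function.comp_apply, AlgHom.toLinearMap_apply, veroneseQuot_mk, veronese,
      aeval_monomial_monomial, coe_basisMonomials, Set.domRestrict_apply]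
  rw [hcomp]
  exact (basisMonomials (Fin 3) ℂ).linearIndependent.comp _ injOn_sum_veroneseExponent.injective

lemma X_mul_X_mem_range_veronese (i j : Fin 3) : X i * X j ∈ veronese.range := by
  obtain ⟨k, hk⟩ : ∃ k, veronesePair k = (i, j) ∨ veronesePair k = (j, i) := by
    fin_cases i <;> fin_cases j <;> decide
  refine ⟨X k, ?_⟩
  rcases hk with hk | hk <;> simp [veronese_X, hk, mul_comm]

lemma aeval_neg_X_veroneseQuot (z : MvPolynomial (Fin 6) ℂ ⧸ IB) :
    aeval (fun i => -X i) (veroneseQuot z) = veroneseQuot z := by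
  obtain ⟨r, rfl⟩ := Ideal.Quotient.mk_surjective z
  suffices h : (aeval fun i => -X i).comp veronese = veronese from AlgHom.congr_fun h r
  refine MvPolynomial.algHom_ext fun k => ?_
  simp [veronese_X]

lemma mem_range_veroneseQuot_of_aeval_neg_X {p : MvPolynomial (Fin 3) ℂ}
    (hp : aeval (fun i => -X i) p = p) : p ∈ veroneseQuot.toRingHom.range := by
  obtain ⟨r, rfl⟩ :=
    mem_of_aeval_neg_X_eq_self (by norm_num) veronese.range X_mul_X_mem_range_veronese hp
  exact ⟨Ideal.Quotient.mk IB r, rfl⟩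

/-- `B = R/I_B` is a normal integral domain: a domain integrally closed in its
field of fractions. -/
theorem stmt6 :
    IsDomain (MvPolynomial (Fin 6) ℂ ⧸ IB) ∧
      IsIntegrallyClosed (MvPolynomial (Fin 6) ℂ ⧸ IB) :=
  ⟨veroneseQuot_injective.isDomain veroneseQuot.toRingHom,
    .of_injective_of_fixed_mem_range veroneseQuot.toRingHom veroneseQuot_injective
      (aeval fun i => -X i).toRingHom aeval_neg_X_veroneseQuot
      fun _ => mem_range_veroneseQuot_of_aeval_neg_X⟩
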